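/- arXiv:2605.04096 — 2 statements merged into one kernel-verified Lean document; each statement's English description precedes it below -/
import Mathlib

section
/- A linear map Φ : M_n(ℂ) → M_n(ℂ) is completely positive if and only if its Choi matrix J(Φ) is positive semidefinite. -/
open scoped ComplexOrder

open Matrix

/-- The induced map `id_k ⊗ Φ` on block matrices indexed by `Fin k × Fin n`. -/
def tensorExtend (n k : ℕ) (Φ : Matrix (Fin n) (Fin n) ℂ →ₗ[ℂ] Matrix (Fin n) (Fin n) ℂ)
    (M : Matrix (Fin k × Fin n) (Fin k × Fin n) ℂ) : Matrix (Fin k × Fin n) (Fin k × Fin n) ℂ :=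
  Matrix.of fun p q => Φ (Matrix.of fun i j => M (p.1, i) (q.1, j)) p.2 q.2

def IsCompletelyPositive (n : ℕ)
    (Φ : Matrix (Fin n) (Fin n) ℂ →ₗ[ℂ] Matrix (Fin n) (Fin n) ℂ) : Prop :=
  ∀ k : ℕ, 1 ≤ k → ∀ M : Matrix (Fin k × Fin n) (Fin k × Fin n) ℂ,
    M.PosSemidef → (tensorExtend n k Φ M).PosSemidef

def IsTracePreserving (n : ℕ)
    (Φ : Matrix (Fin n) (Fin n) ℂ →ₗ[ℂ] Matrix (Fin n) (Fin n) ℂ) : Prop :=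
  ∀ ρ : Matrix (Fin n) (Fin n) ℂ, (Φ ρ).trace = ρ.trace

def IsCPTP (n : ℕ)
    (Φ : Matrix (Fin n) (Fin n) ℂ →ₗ[ℂ] Matrix (Fin n) (Fin n) ℂ) : Prop :=
  IsCompletelyPositive n Φ ∧ IsTracePreserving n Φ

/-- Partial trace over the second tensor factor. -/
noncomputable def ptraceE (n m : ℕ) (M : Matrix (Fin n × Fin m) (Fin n × Fin m) ℂ) :
    Matrix (Fin n) (Fin n) ℂ :=
  Matrix.of fun i j => ∑ k : Fin m, M (i, k) (j, k)

/-- `ρ ⊗ |ω⟩⟨ω|` on `ℂ^n ⊗ ℂ^m`. -/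
def tensorState (n m : ℕ) (ρ : Matrix (Fin n) (Fin n) ℂ) (ω : Fin m → ℂ) :
    Matrix (Fin n × Fin m) (Fin n × Fin m) ℂ :=
  Matrix.of fun p q => ρ p.1 q.1 * (ω p.2 * star (ω q.2))

def IsUnitVec {m : ℕ} (ω : Fin m → ℂ) : Prop := ∑ k, star (ω k) * ω k = 1

def IsUnitaryMat {d : Type*} [Fintype d] [DecidableEq d] (U : Matrix d d ℂ) : Prop :=
  Uᴴ * U = 1 ∧ U * Uᴴ = 1

/-- The Choi matrix `J(Φ) = Σ_{i,j} E_{ij} ⊗ Φ(E_{ij})`. -/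
noncomputable def choiMatrix (n : ℕ)
    (Φ : Matrix (Fin n) (Fin n) ℂ →ₗ[ℂ] Matrix (Fin n) (Fin n) ℂ) :
    Matrix (Fin n × Fin n) (Fin n × Fin n) ℂ :=
  Matrix.of fun p q => Φ (Matrix.single p.1 q.1 1) p.2 q.2

/-!
Expanding `Φ A` entrywise through the Choi matrix `J`, one finds
`(id ⊗ Φ)(u u*) = (U ⊗ 1) J (U ⊗ 1)*`, where `U` is the `k × n` reshaping of `u`.
Since every positive semidefinite matrix is a sum of such rank-one matrices `u u*`, `J ≥ 0`
makes `Φ` completely positive. Conversely, `J` is itself `(id ⊗ Φ)(Ω Ω*)` for the maximally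
entangled vector `Ω = vec 1`.
-/

open scoped Kronecker

section
variable {n k : ℕ} (Φ : Matrix (Fin n) (Fin n) ℂ →ₗ[ℂ] Matrix (Fin n) (Fin n) ℂ)

theorem apply_eq_sum_mul_choiMatrix (A : Matrix (Fin n) (Fin n) ℂ) (x y : Fin n) :
    Φ A x y = ∑ i, ∑ j, A i j * choiMatrix n Φ (i, x) (j, y) := by
  conv_lhs => rw [matrix_eq_sum_single A]
  simp only [map_sum, Matrix.sum_apply]
  refine Finset.sum_congr rfl fun i _ => Finset.sum_congr rfl fun j _ => ?_
  rw [← mul_one (A i j), ← smul_eq_mul, ← smul_single, map_smul]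
  simp [choiMatrix]

theorem tensorExtend_sum {ι : Type*} (s : Finset ι)
    (M : ι → Matrix (Fin k × Fin n) (Fin k × Fin n) ℂ) :
    tensorExtend n k Φ (∑ r ∈ s, M r) = ∑ r ∈ s, tensorExtend n k Φ (M r) := by
  ext p q
  have hblock : (of fun i j => ∑ r ∈ s, M r (p.1, i) (q.1, j)) =
      ∑ r ∈ s, of fun i j => M r (p.1, i) (q.1, j) := by
    ext i j
    simp [Matrix.sum_apply]
  simp only [tensorExtend, of_apply, Matrix.sum_apply]
  rw [hblock, map_sum, Matrix.sum_apply]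

theorem tensorExtend_vecMulVec (u : Fin k × Fin n → ℂ) :
    tensorExtend n k Φ (vecMulVec u (star u)) =
      (of (Function.curry u) ⊗ₖ (1 : Matrix (Fin n) (Fin n) ℂ)) * choiMatrix n Φ *
        (of (Function.curry u) ⊗ₖ (1 : Matrix (Fin n) (Fin n) ℂ))ᴴ := by
  ext p q
  simp only [tensorExtend, vecMulVec_apply, Pi.star_apply, RCLike.star_def,
    apply_eq_sum_mul_choiMatrix, of_apply, mul_apply, kroneckerMap_apply, Function.curry_apply,
    one_apply, mul_ite, mul_one, mul_zero, ite_mul, zero_mul, Fintype.sum_prod_type,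
    Finset.sum_ite_eq, Finset.mem_univ, ↓reduceIte, conjTranspose_apply,
    apply_ite (starRingEnd ℂ), map_zero, Finset.sum_mul]
  rw [Finset.sum_comm]
  exact Finset.sum_congr rfl fun i _ => Finset.sum_congr rfl fun j _ => by ring

theorem tensorExtend_vecMulVec_vec_one :
    tensorExtend n n Φ (vecMulVec (vec 1) (star (vec 1))) = choiMatrix n Φ := by
  have hreshape : of (Function.curry (vec (1 : Matrix (Fin n) (Fin n) ℂ))) = 1ᵀ := rfl
  rw [tensorExtend_vecMulVec, hreshape, transpose_one, one_kronecker_one, conjTranspose_one,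
    one_mul, mul_one]

variable {Φ}

theorem posSemidef_tensorExtend_of_posSemidef_choiMatrix (hC : (choiMatrix n Φ).PosSemidef)
    {M : Matrix (Fin k × Fin n) (Fin k × Fin n) ℂ} (hM : M.PosSemidef) :
    (tensorExtend n k Φ M).PosSemidef := by
  obtain ⟨m, v, rfl⟩ := posSemidef_iff_eq_sum_vecMulVec.mp hM
  rw [tensorExtend_sum]
  refine posSemidef_sum _ fun r _ => ?_
  rw [tensorExtend_vecMulVec]
  exact hC.mul_mul_conjTranspose_same _

theorem IsCompletelyPositive.posSemidef_choiMatrix (h : IsCompletelyPositive n Φ) :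
    (choiMatrix n Φ).PosSemidef := by
  rcases n.eq_zero_or_pos with rfl | hn
  · exact Subsingleton.elim 0 (choiMatrix 0 Φ) ▸ PosSemidef.zero
  · rw [← tensorExtend_vecMulVec_vec_one]
    exact h n hn _ (posSemidef_vecMulVec_self_star _)

end

theorem completely_positive_iff_choi_posSemidef (n : ℕ)
    (Φ : Matrix (Fin n) (Fin n) ℂ →ₗ[ℂ] Matrix (Fin n) (Fin n) ℂ) :
    IsCompletelyPositive n Φ ↔ (choiMatrix n Φ).PosSemidef :=
  ⟨IsCompletelyPositive.posSemidef_choiMatrix,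
    fun hC _ _ _ hM => posSemidef_tensorExtend_of_posSemidef_choiMatrix hC hM⟩
end

section
/- Let V : ℂ^n → ℂ^n ⊗ ℂ^m be an isometry and let ω ∈ ℂ^m be a unit vector. Then there exists a unitary matrix U on ℂ^n ⊗ ℂ^m such that U(x ⊗ ω) = V x for all x ∈ ℂ^n; consequently Tr_E( V ρ V† ) = Tr_E( U (ρ ⊗ |ω⟩⟨ω|) U† ) for all ρ ∈ M_n(ℂ). -/
open scoped ComplexOrder

open Matrix

/-! Both `V` and the embedding `x ↦ x ⊗ ω` are isometries from `ℂ^n` into `ℂ^n ⊗ ℂ^m`. Completing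
the columns of each to an orthonormal basis, along a common embedding of the index sets, gives
unitaries `A` and `B` extending them, and `U = A B†` sends `x ⊗ ω` to `V x`. The partial traces
then agree because already `U (ρ ⊗ |ω⟩⟨ω|) U† = V ρ V†`. -/

namespace Matrix

section Isometry

variable {𝕜 : Type*} [RCLike 𝕜] {ι κ : Type*} [Fintype ι] [DecidableEq κ]

theorem orthonormal_toLp_col_iff {V : Matrix ι κ 𝕜} :
    Orthonormal 𝕜 (fun j => WithLp.toLp 2 (V.col j)) ↔ Vᴴ * V = 1 := by
  rw [← gram_eq_one_iff_orthonormal, gram_eq_conjTranspose_mul (EuclideanSpace.basisFun ι 𝕜)]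
  rfl

variable [DecidableEq ι]

theorem exists_mem_unitaryGroup_submatrix_eq (f : κ ↪ ι) {V : Matrix ι κ 𝕜} (hV : Vᴴ * V = 1) :
    ∃ A ∈ unitaryGroup ι 𝕜, A.submatrix id f = V := by
  set v : κ → EuclideanSpace 𝕜 ι := fun j => WithLp.toLp 2 (V.col j)
  have hv : Orthonormal 𝕜 ((Set.range f).domRestrict (Function.extend f v 0)) := by
    convert (orthonormal_toLp_col_iff.mpr hV).comp _ (Equiv.ofInjective f f.injective).symm.injective
    ext1 ⟨_, j, rfl⟩
    simp [f.injective.extend_apply, v]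
  obtain ⟨b, hb⟩ := hv.exists_orthonormalBasis_extension_of_card_eq (by simp)
  refine ⟨(EuclideanSpace.basisFun ι 𝕜).toBasis.toMatrix b,
    (EuclideanSpace.basisFun ι 𝕜).toMatrix_orthonormalBasis_mem_unitary b, ?_⟩
  ext i j
  simp [Module.Basis.toMatrix_apply, hb (f j) ⟨j, rfl⟩, f.injective.extend_apply, v]

theorem exists_mem_unitaryGroup_mul_eq [Fintype κ] {V W : Matrix ι κ 𝕜}
    (hV : Vᴴ * V = 1) (hW : Wᴴ * W = 1) : ∃ U ∈ unitaryGroup ι 𝕜, U * W = V := by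
  have hcard : Fintype.card κ ≤ Fintype.card ι := by
    simpa using (orthonormal_toLp_col_iff.mpr hV).linearIndependent.fintype_card_le_finrank
  obtain ⟨f⟩ := Function.Embedding.nonempty_of_card_le hcard
  obtain ⟨A, hA, rfl⟩ := exists_mem_unitaryGroup_submatrix_eq f hV
  obtain ⟨B, hB, rfl⟩ := exists_mem_unitaryGroup_submatrix_eq f hW
  refine ⟨A * star B, mul_mem hA (Unitary.star_mem hB), ?_⟩
  rw [← submatrix_id_id (A * star B), ← submatrix_mul _ _ _ _ _ Function.bijective_id, mul_assoc,
    Unitary.star_mul_self_of_mem hB, mul_one]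

end Isometry

section TensorRight

variable {R : Type*} [CommSemiring R] (ι : Type*) [DecidableEq ι] {κ : Type*}

def tensorRight (ω : κ → R) : Matrix (ι × κ) ι R :=
  of fun p j => (1 : Matrix ι ι R) p.1 j * ω p.2

variable [Fintype ι]

theorem tensorRight_mulVec (ω : κ → R) (x : ι → R) :
    tensorRight ι ω *ᵥ x = fun p => x p.1 * ω p.2 := by
  ext p
  simp [tensorRight, mulVec, dotProduct, one_apply, mul_comm]

theorem conjTranspose_tensorRight_mul_self [StarRing R] [Fintype κ] (ω : κ → R) :
    (tensorRight ι ω)ᴴ * tensorRight ι ω = (star ω ⬝ᵥ ω) • (1 : Matrix ι ι R) := by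
  ext i j
  obtain rfl | h := eq_or_ne i j
  · simp [tensorRight, mul_apply, one_apply, Fintype.sum_prod_type, dotProduct]
  · simp [tensorRight, mul_apply, one_apply, Fintype.sum_prod_type, h, h.symm]

end TensorRight

end Matrix

theorem tensorRight_mul_mul_conjTranspose (n m : ℕ) (ρ : Matrix (Fin n) (Fin n) ℂ) (ω : Fin m → ℂ) :
    tensorRight (Fin n) ω * ρ * (tensorRight (Fin n) ω)ᴴ = tensorState n m ρ ω := by
  ext p q
  simp [tensorRight, tensorState, mul_apply, one_apply, apply_ite (starRingEnd ℂ), mul_ite,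
    mul_assoc, mul_left_comm]

theorem isometry_extends_to_unitary_dilation (n m : ℕ)
    (V : Matrix (Fin n × Fin m) (Fin n) ℂ) (hV : Vᴴ * V = 1)
    (ω : Fin m → ℂ) (hω : IsUnitVec ω) :
    ∃ U : Matrix (Fin n × Fin m) (Fin n × Fin m) ℂ, IsUnitaryMat U ∧
      (∀ x : Fin n → ℂ, U.mulVec (fun p => x p.1 * ω p.2) = V.mulVec x) ∧
      ∀ ρ : Matrix (Fin n) (Fin n) ℂ,
        ptraceE n m (V * ρ * Vᴴ) = ptraceE n m (U * tensorState n m ρ ω * Uᴴ) := by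
  have hW : (tensorRight (Fin n) ω)ᴴ * tensorRight (Fin n) ω = 1 := by
    rw [conjTranspose_tensorRight_mul_self, show star ω ⬝ᵥ ω = 1 from hω, one_smul]
  obtain ⟨U, hU, hUW⟩ := exists_mem_unitaryGroup_mul_eq hV hW
  refine ⟨U, ⟨Unitary.star_mul_self_of_mem hU, Unitary.mul_star_self_of_mem hU⟩,
    fun x => ?_, fun ρ => ?_⟩
  · rw [← tensorRight_mulVec, mulVec_mulVec, hUW]
  · rw [← tensorRight_mul_mul_conjTranspose, ← hUW, conjTranspose_mul]
    simp only [Matrix.mul_assoc]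
end
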